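/- Consider the Game of Graph Nim on the disjoint union of a triangle (edges AB, BC, CA) and a single edge DE, with all edge weights positive. Suppose there exist positive integers k, m, i and a natural number ℓ with 1 ≤ i ≤ m+1 and m(m+1)/2 ≤ k ≤ m(m+3)/2 such that w(DE) = k and the multiset {w(AB), w(BC), w(CA)} equals {k+1+(m+1)ℓ, k+i+(m+1)ℓ, k+m+2−i+(m+1)ℓ}. Then the configuration is a losing position for the player to move. -/
import Mathlib


namespace GraphNim

variable {V E : Type} [Fintype E]

/-- A legal move in the Game of Graph Nim: choose a vertex `v` and weakly decrease
the weights of edges incident to `v` (all other edges unchanged), strictly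
decreasing the total weight. -/
def Move (inc : V → E → Prop) (w w' : E → ℕ) : Prop :=
  ∃ v : V, (∀ e, w' e ≤ w e) ∧ (∀ e, ¬ inc v e → w' e = w e) ∧
    (∑ e, w' e) < (∑ e, w e)

/-- A configuration is losing for the player to move: every legal move leads to a
non-losing configuration (the all-zero configuration is vacuously losing). -/
def Losing (inc : V → E → Prop) (w : E → ℕ) : Prop :=
  ∀ w', Move inc w w' → ¬ Losing inc w'
termination_by ∑ e, w e
decreasing_by
  rename_i h
  obtain ⟨v, _, _, h3⟩ := h
  exact h3

/-- A configuration is winning for the player to move: some legal move leads to a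
losing configuration. -/
def Winning (inc : V → E → Prop) (w : E → ℕ) : Prop :=
  ∃ w', Move inc w w' ∧ Losing inc w'

end GraphNim

open GraphNim

/-- Endpoints of the edges of the graph `G₄` (triangle `ABC` plus a disjoint edge
`DE`): vertices `A = 0, B = 1, C = 2, D = 3, E = 4`, edges `AB = 0, BC = 1,
CA = 2, DE = 3`. -/
def g4Ends : Fin 4 → Fin 5 × Fin 5
  | 0 => (0, 1)
  | 1 => (1, 2)
  | 2 => (2, 0)
  | 3 => (3, 4)

def g4Inc (v : Fin 5) (e : Fin 4) : Prop := (g4Ends e).1 = v ∨ (g4Ends e).2 = v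


/-- Triangular numbers. -/
def Tn : ℕ → ℕ
  | 0 => 0
  | m+1 => Tn m + (m+1)

lemma Tn_two (m : ℕ) : 2 * Tn m = m * (m+1) := by
  induction m with
  | zero => rfl
  | succ n ih => show 2 * (Tn n + (n+1)) = _ ; nlinarith [ih]

lemma Tn_mono {a b : ℕ} (h : a ≤ b) : Tn a ≤ Tn b := by
  induction b with
  | zero => have : a = 0 := by omega
            subst this; exact le_refl _
  | succ n ih =>
    rcases Nat.eq_or_lt_of_le h with h' | h'
    · subst h'; exact le_refl _
    · have := ih (by omega)
      have h2 : Tn (n+1) = Tn n + (n+1) := rfl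
      omega

lemma Tn_succ (m : ℕ) : Tn (m+1) = Tn m + (m+1) := rfl

/-- Candidate Grundy value in the window. -/
def k0v (x m : ℕ) : ℕ := Tn m + ((x + m + m * Tn m) % (m+1))

lemma k0v_lb (x m : ℕ) : Tn m ≤ k0v x m := Nat.le_add_right _ _

lemma k0v_ub (x m : ℕ) : k0v x m ≤ Tn m + m := by
  have : (x + m + m * Tn m) % (m+1) < m+1 := Nat.mod_lt _ (by omega)
  unfold k0v; omega

lemma k0v_mod (x m : ℕ) : k0v x m % (m+1) = (x+m) % (m+1) := by
  unfold k0v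
  rw [Nat.add_mod_mod]
  have h : Tn m + (x + m + m * Tn m) = (x + m) + (m+1) * Tn m := by ring
  rw [h, Nat.add_mul_mod_self_left]

lemma window_unique {m u u' : ℕ} (h1 : Tn m ≤ u) (h2 : u ≤ Tn m + m)
    (h3 : Tn m ≤ u') (h4 : u' ≤ Tn m + m) (h5 : u % (m+1) = u' % (m+1)) : u = u' := by
  rcases le_total u u' with h | h
  · have hd : (m+1) ∣ (u' - u) := (Nat.modEq_iff_dvd' h).mp h5
    have := Nat.eq_zero_of_dvd_of_lt hd
    omega
  · have hd : (m+1) ∣ (u - u') := (Nat.modEq_iff_dvd' h).mp h5.symm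
    have := Nat.eq_zero_of_dvd_of_lt hd
    omega

lemma window_disjoint {m m' k : ℕ} (h1 : Tn m ≤ k) (h2 : k ≤ Tn m + m)
    (h3 : Tn m' ≤ k) (h4 : k ≤ Tn m' + m') : m = m' := by
  rcases lt_trichotomy m m' with h | h | h
  · have := Tn_mono (show m+1 ≤ m' by omega); rw [Tn_succ] at this; omega
  · exact h
  · have := Tn_mono (show m'+1 ≤ m by omega); rw [Tn_succ] at this; omega

lemma window_exists (v : ℕ) : ∃ M, Tn M ≤ v ∧ v ≤ Tn M + M := by
  induction v with
  | zero => exact ⟨0, by simp [Tn]⟩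
  | succ n ih =>
    obtain ⟨M, hM1, hM2⟩ := ih
    rcases Nat.eq_or_lt_of_le hM2 with h | h
    · exact ⟨M+1, by rw [Tn_succ]; omega, by rw [Tn_succ]; omega⟩
    · exact ⟨M, by omega, by omega⟩

/-- Grundy value of triangle in (min, spread) coordinates. -/
def G (x m : ℕ) : ℕ := if Tn m < x then k0v x m else 3*x+m

lemma G_flat {x m : ℕ} (h : x ≤ Tn m) : G x m = 3*x+m := if_neg (by omega)

lemma G_special {x m v : ℕ} (h1 : Tn m ≤ v) (h2 : v ≤ Tn m + m)
    (q : ℕ) (hx : x = v + 1 + (m+1) * q) : G x m = v := by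
  have hT : Tn m < x := by omega
  unfold G; rw [if_pos hT]
  refine window_unique (k0v_lb x m) (k0v_ub x m) h1 h2 ?_
  rw [k0v_mod]
  have h : x + m = v + (m+1) * (q+1) := by rw [hx]; ring
  rw [h, Nat.add_mul_mod_self_left]

lemma G_spec (x m : ℕ) : (x ≤ Tn m ∧ G x m = 3*x+m) ∨
    (Tn m ≤ G x m ∧ G x m ≤ Tn m + m ∧ G x m + 1 ≤ x ∧
      ∃ q, x = G x m + 1 + (m+1) * q) := by
  by_cases h : Tn m < x
  · right
    have hG : G x m = k0v x m := if_pos h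
    have hlb := k0v_lb x m
    have hub := k0v_ub x m
    have hmod := k0v_mod x m
    -- x - 1 ≡ k0v (mod m+1)
    have hx1 : 1 ≤ x := by omega
    have hmod' : (x-1) % (m+1) = k0v x m % (m+1) := by
      rw [hmod]
      have : x + m = (x-1) + (m+1) := by omega
      rw [this, Nat.add_mod_right]
    -- show k0v ≤ x - 1
    have hle : k0v x m ≤ x - 1 := by
      by_contra hc
      have hd : (m+1) ∣ (k0v x m - (x-1)) := (Nat.modEq_iff_dvd' (by omega)).mp hmod'
      have := Nat.eq_zero_of_dvd_of_lt hd
      omega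
    have hd : (m+1) ∣ ((x-1) - k0v x m) := (Nat.modEq_iff_dvd' hle).mp hmod'.symm
    obtain ⟨q, hq⟩ := hd
    exact ⟨by omega, by omega, by omega, q, by omega⟩
  · left; exact ⟨by omega, if_neg h⟩

/-- Symmetric Grundy value of the triangle on raw weights. -/
def Fc (a b c : ℕ) : ℕ := G (min a (min b c)) (a + b + c - 3 * min a (min b c))

lemma Fc_swap12 (a b c : ℕ) : Fc a b c = Fc b a c := by
  unfold Fc
  rw [min_left_comm, show a+b+c = b+a+c by ring]

lemma Fc_swap23 (a b c : ℕ) : Fc a b c = Fc a c b := by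
  unfold Fc
  rw [min_comm b c, show a+b+c = a+c+b by ring]

lemma Fc_special {a b c v M q : ℕ} (h1 : Tn M ≤ v) (h2 : v ≤ Tn M + M)
    (hmin : min a (min b c) = v + 1 + (M+1) * q)
    (hsum : a + b + c = 3 * (v + 1 + (M+1) * q) + M) : Fc a b c = v := by
  unfold Fc
  rw [hmin, show a + b + c - 3 * (v + 1 + (M+1)*q) = M by omega]
  exact G_special h1 h2 q rfl

lemma Fc_flat {a b c : ℕ} (h : min a (min b c) ≤ Tn (a+b+c - 3 * min a (min b c))) :
    Fc a b c = a + b + c := by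
  unfold Fc
  rw [G_flat h]
  omega

lemma Fc_cases (a b c : ℕ) :
    (min a (min b c) ≤ Tn (a+b+c - 3 * min a (min b c)) ∧ Fc a b c = a+b+c) ∨
    (Tn (a+b+c - 3 * min a (min b c)) ≤ Fc a b c ∧
     Fc a b c ≤ Tn (a+b+c - 3 * min a (min b c)) + (a+b+c - 3 * min a (min b c)) ∧
     Fc a b c + 1 ≤ min a (min b c) ∧
     ∃ q, min a (min b c) = Fc a b c + 1 + ((a+b+c - 3 * min a (min b c))+1) * q) := by
  have h := G_spec (min a (min b c)) (a+b+c - 3 * min a (min b c))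
  unfold Fc
  rcases h with ⟨h1, h2⟩ | h
  · left; refine ⟨h1, ?_⟩; rw [h2]; omega
  · right; exact h

lemma Fc_le_sum (a b c : ℕ) : Fc a b c ≤ a + b + c := by
  rcases Fc_cases a b c with ⟨_, h⟩ | ⟨_, _, h, _⟩ <;> omega

/-- No triangle move preserves the value `Fc`. -/
lemma P2 {a b c a' b' c' : ℕ} (h1 : a' ≤ a) (h2 : b' ≤ b) (h3 : c' ≤ c)
    (hfix : a' = a ∨ b' = b ∨ c' = c) (hlt : a' + b' + c' < a + b + c) :
    Fc a' b' c' ≠ Fc a b c := by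
  intro hF
  have hxa : min a (min b c) ≤ a := by omega
  have hxb : min a (min b c) ≤ b := by omega
  have hxc : min a (min b c) ≤ c := by omega
  have hxa' : min a' (min b' c') ≤ a' := by omega
  have hxb' : min a' (min b' c') ≤ b' := by omega
  have hxc' : min a' (min b' c') ≤ c' := by omega
  -- common coordinate u
  obtain ⟨u, hu1, hu2, hu3, hu4⟩ :
      ∃ u, min a (min b c) ≤ u ∧ u + 2 * min a (min b c) ≤ a + b + c ∧
        min a' (min b' c') ≤ u ∧ u + 2 * min a' (min b' c') ≤ a' + b' + c' := by
    rcases hfix with h | h | h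
    · exact ⟨a, by omega, by omega, by omega, by omega⟩
    · exact ⟨b, by omega, by omega, by omega, by omega⟩
    · exact ⟨c, by omega, by omega, by omega, by omega⟩
  rcases Fc_cases a b c with ⟨hf1, hf2⟩ | ⟨hw1, hw2, hw3, q, hq⟩ <;>
    rcases Fc_cases a' b' c' with ⟨hg1, hg2⟩ | ⟨hw1', hw2', hw3', q', hq'⟩
  · omega
  · omega
  · omega
  · -- both special
    set m := a + b + c - 3 * min a (min b c) with hm
    set m' := a' + b' + c' - 3 * min a' (min b' c') with hm'
    have hmm : m = m' := window_disjoint hw1 hw2 (hF ▸ hw1') (hF ▸ hw2')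
    rw [hF] at hq'
    rw [← hmm] at hq'
    -- x = w+1+(m+1)q, x' = w+1+(m+1)q', |x - x'| ≤ m
    rcases le_or_gt q q' with h | h
    · rcases Nat.eq_or_lt_of_le h with h' | h'
      · subst h'
        omega
      · have h5 : (m+1) * (q+1) ≤ (m+1) * q' := Nat.mul_le_mul_left _ (by omega)
        have h6 : (m+1) * (q+1) = (m+1) * q + (m+1) := by ring
        omega
    · have h5 : (m+1) * (q'+1) ≤ (m+1) * q := Nat.mul_le_mul_left _ (by omega)
      have h6 : (m+1) * (q'+1) = (m+1) * q' + (m+1) := by ring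
      omega

/-- Every value below `Fc` is reachable by a triangle move (sorted version). -/
lemma P3 {x y z v : ℕ} (hxy : x ≤ y) (hyz : y ≤ z) (hv : v < Fc x y z) :
    ∃ x' y' z', x' ≤ x ∧ y' ≤ y ∧ z' ≤ z ∧ (x' = x ∨ y' = y ∨ z' = z) ∧
      x' + y' + z' < x + y + z ∧ Fc x' y' z' = v := by
  have hmin : min x (min y z) = x := by omega
  have hle := Fc_le_sum x y z
  by_cases hvx : x ≤ v
  · by_cases h1 : v ≤ x + z
    · -- target (x, 0, v - x), flat with min 0
      refine ⟨x, 0, v - x, le_refl _, by omega, by omega, Or.inl rfl, by omega, ?_⟩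
      have h := Fc_flat (a := x) (b := 0) (c := v - x) (by simp)
      omega
    · by_cases h2 : v ≤ y + z
      · -- target (0, y, v - y)
        refine ⟨0, y, v - y, by omega, le_refl _, by omega, Or.inr (Or.inl rfl), by omega, ?_⟩
        have h := Fc_flat (a := 0) (b := y) (c := v - y) (by simp)
        omega
      · -- y + z < v < sum : decrease min alone
        have hflat : x ≤ Tn (x+y+z - 3*x) := by
          rcases Fc_cases x y z with ⟨h, _⟩ | ⟨_, _, h, _⟩
          · rwa [hmin] at h
          · omega
        refine ⟨v - (y+z), y, z, by omega, le_refl _, le_refl _,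
          Or.inr (Or.inl rfl), by omega, ?_⟩
        have hm2 : min (v - (y+z)) (min y z) = v - (y+z) := by omega
        have h := Fc_flat (a := v - (y+z)) (b := y) (c := z)
          (by rw [hm2]
              have := Tn_mono (show x+y+z-3*x ≤ (v-(y+z))+y+z - 3*(v-(y+z)) by omega)
              omega)
        omega
  · -- v < x
    obtain ⟨M, hM1, hM2⟩ := window_exists v
    obtain ⟨q, r, hqr, hr⟩ : ∃ q r, (M+1) * q + r = x - v - 1 ∧ r ≤ M := by
      refine ⟨(x - v - 1) / (M+1), (x - v - 1) % (M+1), Nat.div_add_mod _ _, ?_⟩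
      have : (x - v - 1) % (M+1) < M + 1 := Nat.mod_lt _ (by omega)
      omega
    obtain ⟨t, htdef⟩ : ∃ t, t = v + 1 + (M+1) * q := ⟨_, rfl⟩
    have hts : t ≤ x := by omega
    have htx : x ≤ t + M := by omega
    by_cases hz : t + M ≤ z
    · -- keep x; (x, t, 2t+M-x)
      have hFtarget : Fc x t (2*t+M - x) = v := by
        apply Fc_special hM1 hM2 (q := q)
        · omega
        · omega
      refine ⟨x, t, 2*t+M - x, le_refl _, by omega, by omega, Or.inl rfl, ?_, hFtarget⟩
      by_contra hcon
      have hx1 : x = t ∧ y = t ∧ z = t + M := by omega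
      have : Fc x y z = v := by
        apply Fc_special hM1 hM2 (q := q) <;> omega
      omega
    · -- clustered: keep y; (t, y, 2t+M-y)
      have hMpos : 1 ≤ M := by omega
      have h2 : 2*t + M ≤ y + z := by
        by_contra hcon
        have e1 : Tn ((M-1)+1) = Tn (M-1) + ((M-1)+1) := Tn_succ _
        rw [show (M-1)+1 = M by omega] at e1
        have e2 := Tn_mono (show x+y+z-3*x ≤ M-1 by omega)
        have hc := Fc_cases x y z
        rw [hmin] at hc
        rcases hc with ⟨h, hfe⟩ | ⟨_, h, _, _⟩ <;> omega
      have hFtarget : Fc t y (2*t+M - y) = v := by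
        apply Fc_special hM1 hM2 (q := q)
        · omega
        · omega
      refine ⟨t, y, 2*t+M - y, hts, le_refl _, by omega, Or.inr (Or.inl rfl), ?_, hFtarget⟩
      by_contra hcon
      have : Fc x y z = v := by
        apply Fc_special hM1 hM2 (q := q) <;> omega
      omega

lemma Fc_rot (a b c : ℕ) : Fc a b c = Fc b c a := by
  rw [Fc_swap12, Fc_swap23]

/-- Unsorted version of P3. -/
lemma P3' {a b c v : ℕ} (hv : v < Fc a b c) :
    ∃ a' b' c', a' ≤ a ∧ b' ≤ b ∧ c' ≤ c ∧ (a' = a ∨ b' = b ∨ c' = c) ∧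
      a' + b' + c' < a + b + c ∧ Fc a' b' c' = v := by
  rcases le_total a b with h1 | h1 <;> rcases le_total b c with h2 | h2 <;>
    rcases le_total a c with h3 | h3
  · obtain ⟨x', y', z', e1, e2, e3, efix, elt, eF⟩ := P3 h1 h2 hv
    exact ⟨x', y', z', e1, e2, e3, efix, by omega, eF⟩
  · obtain ⟨x', y', z', e1, e2, e3, efix, elt, eF⟩ := P3 h1 h2 hv
    exact ⟨x', y', z', e1, e2, e3, efix, by omega, eF⟩
  · -- a ≤ c ≤ b : sorted (a, c, b)
    rw [Fc_swap23] at hv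
    obtain ⟨x', y', z', e1, e2, e3, efix, elt, eF⟩ := P3 h3 h2 hv
    exact ⟨x', z', y', e1, e3, e2, by tauto, by omega, by rw [Fc_swap23]; exact eF⟩
  · -- c ≤ a ≤ b : sorted (c, a, b)
    rw [show Fc a b c = Fc c a b from (Fc_rot c a b).symm] at hv
    obtain ⟨x', y', z', e1, e2, e3, efix, elt, eF⟩ := P3 h3 h1 hv
    exact ⟨y', z', x', e2, e3, e1, by tauto, by omega, by rw [← Fc_rot]; exact eF⟩
  · -- b ≤ a ≤ c : sorted (b, a, c)
    rw [Fc_swap12] at hv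
    obtain ⟨x', y', z', e1, e2, e3, efix, elt, eF⟩ := P3 h1 h3 hv
    exact ⟨y', x', z', e2, e1, e3, by tauto, by omega, by rw [Fc_swap12]; exact eF⟩
  · -- b ≤ c ≤ a : sorted (b, c, a)
    rw [Fc_rot] at hv
    obtain ⟨x', y', z', e1, e2, e3, efix, elt, eF⟩ := P3 h2 h3 hv
    exact ⟨z', x', y', e3, e1, e2, by tauto, by omega, by rw [Fc_rot]; exact eF⟩
  · -- c ≤ b ≤ a and a ≤ c : all equal, use (c, b, a)
    rw [show Fc a b c = Fc c b a by rw [Fc_swap12, Fc_swap23, Fc_swap12]] at hv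
    obtain ⟨x', y', z', e1, e2, e3, efix, elt, eF⟩ := P3 h2 h1 hv
    exact ⟨z', y', x', e3, e2, e1, by tauto, by omega,
      by rw [show Fc z' y' x' = Fc x' y' z' by rw [Fc_swap12, Fc_swap23, Fc_swap12]]; exact eF⟩
  · -- c ≤ b ≤ a : sorted (c, b, a)
    rw [show Fc a b c = Fc c b a by rw [Fc_swap12, Fc_swap23, Fc_swap12]] at hv
    obtain ⟨x', y', z', e1, e2, e3, efix, elt, eF⟩ := P3 h2 h1 hv
    exact ⟨z', y', x', e3, e2, e1, by tauto, by omega,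
      by rw [show Fc z' y' x' = Fc x' y' z' by rw [Fc_swap12, Fc_swap23, Fc_swap12]]; exact eF⟩

section GameGlue

lemma move_elim {w w' : Fin 4 → ℕ} (h : Move g4Inc w w') :
    (w' 0 ≤ w 0 ∧ w' 1 ≤ w 1 ∧ w' 2 ≤ w 2 ∧ w' 3 ≤ w 3) ∧
    (w' 0 + w' 1 + w' 2 + w' 3 < w 0 + w 1 + w 2 + w 3) ∧
    ((w' 1 = w 1 ∧ w' 3 = w 3) ∨ (w' 2 = w 2 ∧ w' 3 = w 3) ∨
     (w' 0 = w 0 ∧ w' 3 = w 3) ∨ (w' 0 = w 0 ∧ w' 1 = w 1 ∧ w' 2 = w 2)) := by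
  obtain ⟨v, hle, hfix, hlt⟩ := h
  rw [Fin.sum_univ_four, Fin.sum_univ_four] at hlt
  refine ⟨⟨hle 0, hle 1, hle 2, hle 3⟩, hlt, ?_⟩
  fin_cases v
  · exact Or.inl ⟨hfix 1 (by unfold g4Inc; decide), hfix 3 (by unfold g4Inc; decide)⟩
  · exact Or.inr (Or.inl ⟨hfix 2 (by unfold g4Inc; decide), hfix 3 (by unfold g4Inc; decide)⟩)
  · exact Or.inr (Or.inr (Or.inl ⟨hfix 0 (by unfold g4Inc; decide),
      hfix 3 (by unfold g4Inc; decide)⟩))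
  · exact Or.inr (Or.inr (Or.inr ⟨hfix 0 (by unfold g4Inc; decide),
      hfix 1 (by unfold g4Inc; decide), hfix 2 (by unfold g4Inc; decide)⟩))
  · exact Or.inr (Or.inr (Or.inr ⟨hfix 0 (by unfold g4Inc; decide),
      hfix 1 (by unfold g4Inc; decide), hfix 2 (by unfold g4Inc; decide)⟩))

lemma losing_iff : ∀ n : ℕ, ∀ w : Fin 4 → ℕ, w 0 + w 1 + w 2 + w 3 = n →
    (Fc (w 0) (w 1) (w 2) = w 3 → Losing g4Inc w) ∧
    (Fc (w 0) (w 1) (w 2) ≠ w 3 → ¬ Losing g4Inc w) := by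
  intro n
  induction n using Nat.strong_induction_on with
  | _ n ih =>
  intro w hw
  constructor
  · intro hL
    rw [Losing]
    intro w' hmv
    obtain ⟨⟨l0, l1, l2, l3⟩, hlt, hcase⟩ := move_elim hmv
    have hw' : w' 0 + w' 1 + w' 2 + w' 3 < n := by omega
    have hnot : Fc (w' 0) (w' 1) (w' 2) ≠ w' 3 := by
      rcases hcase with ⟨f1, f3⟩ | ⟨f2, f3⟩ | ⟨f0, f3⟩ | ⟨f0, f1, f2⟩
      · have hne := P2 l0 l1 l2 (Or.inr (Or.inl f1)) (by omega)
        omega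
      · have hne := P2 l0 l1 l2 (Or.inr (Or.inr f2)) (by omega)
        omega
      · have hne := P2 l0 l1 l2 (Or.inl f0) (by omega)
        omega
      · have heq : Fc (w' 0) (w' 1) (w' 2) = Fc (w 0) (w 1) (w 2) := by
          rw [f0, f1, f2]
        omega
    exact (ih _ hw' w' rfl).2 hnot
  · intro hne hLos
    rw [Losing] at hLos
    rcases Nat.lt_or_ge (w 3) (Fc (w 0) (w 1) (w 2)) with hgt | hge
    · -- respond on the triangle
      obtain ⟨a', b', c', e1, e2, e3, efix, elt, eF⟩ := P3' hgt
      have hv0 : (![a', b', c', w 3] : Fin 4 → ℕ) 0 = a' := rfl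
      have hv1 : (![a', b', c', w 3] : Fin 4 → ℕ) 1 = b' := rfl
      have hv2 : (![a', b', c', w 3] : Fin 4 → ℕ) 2 = c' := rfl
      have hv3 : (![a', b', c', w 3] : Fin 4 → ℕ) 3 = w 3 := rfl
      have hmv : Move g4Inc w ![a', b', c', w 3] := by
        have hsum : (∑ e, (![a', b', c', w 3] : Fin 4 → ℕ) e) < ∑ e, w e := by
          rw [Fin.sum_univ_four, Fin.sum_univ_four, hv0, hv1, hv2, hv3]
          omega
        have hble : ∀ e, (![a', b', c', w 3] : Fin 4 → ℕ) e ≤ w e := by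
          intro e
          fin_cases e
          · exact e1
          · exact e2
          · exact e3
          · exact le_refl _
        rcases efix with hf | hf | hf
        · refine ⟨2, hble, ?_, hsum⟩
          intro e he
          fin_cases e
          · exact hf
          · exact absurd (by unfold g4Inc; decide) he
          · exact absurd (by unfold g4Inc; decide) he
          · rfl
        · refine ⟨0, hble, ?_, hsum⟩
          intro e he
          fin_cases e
          · exact absurd (by unfold g4Inc; decide) he
          · exact hf
          · exact absurd (by unfold g4Inc; decide) he
          · rfl
        · refine ⟨1, hble, ?_, hsum⟩
          intro e he
          fin_cases e
          · exact absurd (by unfold g4Inc; decide) he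
          · exact absurd (by unfold g4Inc; decide) he
          · exact hf
          · rfl
      have hsml : a' + b' + c' + w 3 < n := by omega
      have hlos' : Losing g4Inc ![a', b', c', w 3] :=
        (ih _ hsml ![a', b', c', w 3] rfl).1 (by rw [hv0, hv1, hv2, hv3, eF])
      exact hLos _ hmv hlos'
    · -- pile move
      have hlt3 : Fc (w 0) (w 1) (w 2) < w 3 := by omega
      have hv0 : (![w 0, w 1, w 2, Fc (w 0) (w 1) (w 2)] : Fin 4 → ℕ) 0 = w 0 := rfl
      have hv1 : (![w 0, w 1, w 2, Fc (w 0) (w 1) (w 2)] : Fin 4 → ℕ) 1 = w 1 := rfl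
      have hv2 : (![w 0, w 1, w 2, Fc (w 0) (w 1) (w 2)] : Fin 4 → ℕ) 2 = w 2 := rfl
      have hv3 : (![w 0, w 1, w 2, Fc (w 0) (w 1) (w 2)] : Fin 4 → ℕ) 3
          = Fc (w 0) (w 1) (w 2) := rfl
      have hmv : Move g4Inc w ![w 0, w 1, w 2, Fc (w 0) (w 1) (w 2)] := by
        refine ⟨3, ?_, ?_, ?_⟩
        · intro e
          fin_cases e
          · exact le_refl _
          · exact le_refl _
          · exact le_refl _
          · exact le_of_lt hlt3
        · intro e he
          fin_cases e
          · rfl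
          · rfl
          · rfl
          · exact absurd (by unfold g4Inc; decide) he
        · rw [Fin.sum_univ_four, Fin.sum_univ_four, hv0, hv1, hv2, hv3]
          omega
      have hsml : w 0 + w 1 + w 2 + Fc (w 0) (w 1) (w 2) < n := by omega
      have hlos' : Losing g4Inc ![w 0, w 1, w 2, Fc (w 0) (w 1) (w 2)] :=
        (ih _ hsml _ rfl).1 (by rw [hv0, hv1, hv2, hv3])
      exact hLos _ hmv hlos'

end GameGlue


/-- On `G₄`, if `w(DE) = k` and the multiset `{w(AB), w(BC), w(CA)}` is
`(k,ℓ,m,i)`-special (with `1 ≤ i ≤ m+1` and `m(m+1)/2 ≤ k ≤ m(m+3)/2`), then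
the configuration is losing for the player to move. -/
theorem g4_losing_special (w : Fin 4 → ℕ) (hpos : ∀ e, 0 < w e)
    (k m i ℓ : ℕ) (hk : 0 < k) (hm : 0 < m) (hi : 0 < i) (him : i ≤ m + 1)
    (hk1 : m * (m + 1) / 2 ≤ k) (hk2 : k ≤ m * (m + 3) / 2)
    (hDE : w 3 = k)
    (hmul : ({w 0, w 1, w 2} : Multiset ℕ) =
      {k + 1 + (m + 1) * ℓ, k + i + (m + 1) * ℓ, k + m + 2 - i + (m + 1) * ℓ}) :
    Losing g4Inc w := by
  have h0 : w 0 ∈ ({w 0, w 1, w 2} : Multiset ℕ) := by simp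
  have h1 : w 1 ∈ ({w 0, w 1, w 2} : Multiset ℕ) := by simp
  have h2 : w 2 ∈ ({w 0, w 1, w 2} : Multiset ℕ) := by simp
  rw [hmul] at h0 h1 h2
  simp only [Multiset.insert_eq_cons, Multiset.mem_cons, Multiset.mem_singleton] at h0 h1 h2
  have hA : k + 1 + (m + 1) * ℓ ∈ ({w 0, w 1, w 2} : Multiset ℕ) := by rw [hmul]; simp
  simp only [Multiset.insert_eq_cons, Multiset.mem_cons, Multiset.mem_singleton] at hA
  have hsum : w 0 + w 1 + w 2 =
      (k + 1 + (m + 1) * ℓ) + (k + i + (m + 1) * ℓ) + (k + m + 2 - i + (m + 1) * ℓ) := by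
    have hs := congrArg Multiset.sum hmul
    simp only [Multiset.insert_eq_cons, Multiset.sum_cons, Multiset.sum_singleton] at hs
    omega
  have hmin : min (w 0) (min (w 1) (w 2)) = k + 1 + (m + 1) * ℓ := by omega
  have h2T : 2 * Tn m = m * (m + 1) := Tn_two m
  have hm3 : m * (m + 3) = m * (m + 1) + 2 * m := by ring
  have hk1' : Tn m ≤ k := by omega
  have hk2' : k ≤ Tn m + m := by omega
  have hFc : Fc (w 0) (w 1) (w 2) = k :=
    Fc_special hk1' hk2' (q := ℓ) hmin (by omega)
  exact (losing_iff (w 0 + w 1 + w 2 + w 3) w rfl).1 (by rw [hDE]; exact hFc)
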